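/- Let P ∈ M_2(ℍ) have substantial right eigenvalues λ₁ ≠ λ₂ (complex numbers, each real or with positive imaginary part). Then P is diagonalizable: P is similar over ℍ to the diagonal matrix diag(λ₁, λ₂). -/

import Mathlib

noncomputable section
open Matrix Polynomial

abbrev Hq := Quaternion ℝ

def toH (z : ℂ) : Hq := ⟨z.re, z.im, 0, 0⟩

def toC1 (q : Hq) : ℂ := ⟨q.re, q.imI⟩
def toC2 (q : Hq) : ℂ := ⟨q.imJ, q.imK⟩

def chi {m : ℕ} (P : Matrix (Fin m) (Fin m) Hq) :
    Matrix (Fin m ⊕ Fin m) (Fin m ⊕ Fin m) ℂ :=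
  Matrix.fromBlocks (P.map toC1) (P.map toC2)
    (-(P.map fun q => star (toC2 q))) (P.map fun q => star (toC1 q))

/-!
A root `l₁` of the characteristic polynomial of `χ(P)` gives a complex eigenvector of `χ(P)`,
which folds back into a quaternionic right eigenvector `v` with `P v = v l₁`. Conjugating by an
invertible matrix with first column `v` makes `P` upper triangular with diagonal `(l₁, c)`. As `χ`
is multiplicative, the characteristic polynomial of `χ` is a similarity invariant, and for a
triangular matrix it factors along the diagonal; so `c` has the real part and norm of `l₂`, hence
`c q = q l₂` for some `q ≠ 0`. The off-diagonal entry is then cleared by solving the Sylvester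
equation `l₁ x + b = x l₂`, which splits into two complex equations with coefficients `l₂ - l₁` and
`l̄₂ - l₁`; neither vanishes because `l₁ ≠ l₂` both lie in the closed upper half-plane.
-/

lemma exists_mulVec_eq_smul_of_isRoot_charpoly {K n : Type*} [Field K] [Fintype n] [DecidableEq n]
    {M : Matrix n n K} {t : K} (h : M.charpoly.IsRoot t) : ∃ w ≠ 0, M *ᵥ w = t • w := by
  rw [IsRoot, eval_charpoly] at h
  obtain ⟨w, hw, hMw⟩ := exists_mulVec_eq_zero_iff.2 h
  refine ⟨w, hw, ?_⟩
  simpa [sub_mulVec, sub_eq_zero, eq_comm] using hMw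

lemma units_inv_mul_mul_apply_of_col_eq {R n : Type*} [Ring R] [Fintype n] [DecidableEq n]
    (S : (Matrix n n R)ˣ) (P : Matrix n n R) {v : n → R} {a : R} {j : n}
    (hS : ∀ i, S.val i j = v i) (hPv : ∀ i, (P *ᵥ v) i = v i * a) (i : n) :
    (S.inv * P * S.val) i j = (1 : Matrix n n R) i j * a := by
  have hPS : ∀ k, (P * S.val) k j = v k * a := fun k => by
    rw [← hPv, mul_apply, mulVec, dotProduct]; simp only [hS]
  rw [mul_assoc, mul_apply]
  simp only [hPS, ← mul_assoc, ← Finset.sum_mul]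
  rw [← S.inv_val, mul_apply]
  simp only [hS]

section DivisionRing

variable {K : Type*} [DivisionRing K]

lemma exists_units_fin_two_col_zero_eq {v : Fin 2 → K} (hv : v ≠ 0) :
    ∃ S : (Matrix (Fin 2) (Fin 2) K)ˣ, ∀ i, S.val i 0 = v i := by
  by_cases h0 : v 0 = 0
  · have h1 : v 1 ≠ 0 := fun h1 => hv (funext <| Fin.forall_fin_two.2 ⟨h0, h1⟩)
    refine ⟨⟨!![0, 1; v 1, 0], !![0, (v 1)⁻¹; 1, 0], ?_, ?_⟩, ?_⟩
    · rw [mul_fin_two, one_fin_two]; simp [h1]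
    · rw [mul_fin_two, one_fin_two]; simp [h1]
    · simp [Fin.forall_fin_two, h0]
  · refine ⟨⟨!![v 0, 0; v 1, 1], !![(v 0)⁻¹, 0; -(v 1 * (v 0)⁻¹), 1], ?_, ?_⟩, ?_⟩
    · rw [mul_fin_two, one_fin_two]; simp [h0]
    · rw [mul_fin_two, one_fin_two]; simp [h0]
    · simp [Fin.forall_fin_two]

lemma exists_units_upper_triangular_eq_diag {a b c d q x : K} (hq : q ≠ 0)
    (hc : c * q = q * d) (hx : a * x + b * q = x * d) :
    ∃ S : (Matrix (Fin 2) (Fin 2) K)ˣ, !![a, b; 0, c] = S.val * !![a, 0; 0, d] * S.inv := by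
  set S := !![1, x; 0, q]
  set R := !![1, -(x * q⁻¹); 0, q⁻¹]
  have hSR : S * R = 1 := by rw [mul_fin_two, one_fin_two]; simp [hq]
  have hRS : R * S = 1 := by rw [mul_fin_two, one_fin_two]; simp [hq]
  have hMS : !![a, b; 0, c] * S = S * !![a, 0; 0, d] := by
    rw [mul_fin_two, mul_fin_two]; simp [hc, hx]
  refine ⟨⟨S, R, hSR, hRS⟩, ?_⟩
  calc !![a, b; 0, c] = !![a, b; 0, c] * S * R := by rw [mul_assoc, hSR, mul_one]
    _ = S * !![a, 0; 0, d] * R := by rw [hMS]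

end DivisionRing

lemma X_sub_C_mul_X_sub_C_conj (z : ℂ) :
    (X - C z) * (X - C (starRingEnd ℂ z)) =
      X ^ 2 - C (2 * z.re : ℂ) * X + C ((Complex.normSq z : ℝ) : ℂ) := by
  have hre : (2 * z.re : ℂ) = z + starRingEnd ℂ z := by rw [Complex.add_conj]; push_cast; ring
  rw [hre, ← Complex.mul_conj, C_add, C_mul]
  ring

lemma conj_ne_of_ne_of_im_nonneg {z w : ℂ} (hz : 0 ≤ z.im) (hw : 0 ≤ w.im) (h : w ≠ z) :
    starRingEnd ℂ w ≠ z := by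
  intro hconj
  have hre := congrArg Complex.re hconj
  have him := congrArg Complex.im hconj
  simp only [Complex.conj_re, Complex.conj_im] at hre him
  exact h (Complex.ext hre (by linarith))

/-- `ofC a b` is the quaternion `a + b j`, with `ℂ = ℝ + ℝ i` inside `ℍ`. -/
def ofC (a b : ℂ) : Hq := ⟨a.re, a.im, b.re, b.im⟩

@[simp] lemma toC1_ofC (a b : ℂ) : toC1 (ofC a b) = a := rfl

@[simp] lemma toC2_ofC (a b : ℂ) : toC2 (ofC a b) = b := rfl

@[simp] lemma toC1_toH (z : ℂ) : toC1 (toH z) = z := rfl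

@[simp] lemma toC2_toH (z : ℂ) : toC2 (toH z) = 0 := rfl

lemma ofC_toC (p : Hq) : ofC (toC1 p) (toC2 p) = p := rfl

lemma ext_toC {p q : Hq} (h1 : toC1 p = toC1 q) (h2 : toC2 p = toC2 q) : p = q := by
  rw [← ofC_toC p, ← ofC_toC q, h1, h2]

@[simp] lemma ofC_eq_zero {a b : ℂ} : ofC a b = 0 ↔ a = 0 ∧ b = 0 :=
  ⟨fun h => ⟨congrArg toC1 h, congrArg toC2 h⟩, fun ⟨ha, hb⟩ => by subst ha hb; rfl⟩

lemma toC1_zero : toC1 0 = 0 := rfl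

lemma toC2_zero : toC2 0 = 0 := rfl

lemma toC1_one : toC1 1 = 1 := rfl

lemma toC2_one : toC2 1 = 0 := rfl

lemma toC1_add (p q : Hq) : toC1 (p + q) = toC1 p + toC1 q := rfl

lemma toC2_add (p q : Hq) : toC2 (p + q) = toC2 p + toC2 q := rfl

lemma re_toC1 (p : Hq) : (toC1 p).re = p.re := rfl

def toC1Hom : Hq →+ ℂ where
  toFun := toC1
  map_zero' := rfl
  map_add' _ _ := rfl

def toC2Hom : Hq →+ ℂ where
  toFun := toC2
  map_zero' := rfl
  map_add' _ _ := rfl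

lemma toC1_sum {ι : Type*} (s : Finset ι) (f : ι → Hq) :
    toC1 (∑ i ∈ s, f i) = ∑ i ∈ s, toC1 (f i) :=
  map_sum toC1Hom f s

lemma toC2_sum {ι : Type*} (s : Finset ι) (f : ι → Hq) :
    toC2 (∑ i ∈ s, f i) = ∑ i ∈ s, toC2 (f i) :=
  map_sum toC2Hom f s

lemma toC1_mul (p q : Hq) :
    toC1 (p * q) = toC1 p * toC1 q - toC2 p * starRingEnd ℂ (toC2 q) := by
  apply Complex.ext <;> simp [toC1, toC2, Quaternion.re_mul, Quaternion.imI_mul] <;> ring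

lemma toC2_mul (p q : Hq) :
    toC2 (p * q) = toC1 p * toC2 q + toC2 p * starRingEnd ℂ (toC1 q) := by
  apply Complex.ext <;> simp [toC1, toC2, Quaternion.imJ_mul, Quaternion.imK_mul] <;> ring

lemma normSq_eq_normSq_toC1_add_normSq_toC2 (p : Hq) :
    Quaternion.normSq p = Complex.normSq (toC1 p) + Complex.normSq (toC2 p) := by
  simp only [Quaternion.normSq_def', Complex.normSq_apply, toC1, toC2]
  ring

lemma chi_mul {m : ℕ} (M N : Matrix (Fin m) (Fin m) Hq) : chi (M * N) = chi M * chi N := by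
  ext (i | i) (j | j) <;>
    simp only [chi, fromBlocks_apply₁₁, fromBlocks_apply₁₂, fromBlocks_apply₂₁,
      fromBlocks_apply₂₂, map_apply, mul_apply, Matrix.neg_apply, Fintype.sum_sum_type, toC1_sum,
      toC2_sum, toC1_mul, toC2_mul, star_sum, ← Finset.sum_add_distrib, ← Finset.sum_neg_distrib]
  all_goals
    refine Finset.sum_congr rfl fun k _ => ?_
    simp only [starRingEnd_apply, star_add, star_sub, star_mul', star_star] <;> ring

lemma chi_one {m : ℕ} : chi (1 : Matrix (Fin m) (Fin m) Hq) = 1 := by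
  ext (i | i) (j | j) <;> by_cases h : i = j <;>
    simp [chi, one_apply, h, toC1_one, toC2_one, toC1_zero, toC2_zero]

def chiHom (m : ℕ) : Matrix (Fin m) (Fin m) Hq →* Matrix (Fin m ⊕ Fin m) (Fin m ⊕ Fin m) ℂ where
  toFun := chi
  map_one' := chi_one
  map_mul' := chi_mul

lemma charpoly_chi_units_conj {m : ℕ} (S : (Matrix (Fin m) (Fin m) Hq)ˣ)
    (P : Matrix (Fin m) (Fin m) Hq) : (chi (S.inv * P * S.val)).charpoly = (chi P).charpoly := by
  have h : chi (S.inv * P * S.val) =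
      (Units.map (chiHom m) S).inv * chi P * (Units.map (chiHom m) S).val := by
    rw [chi_mul, chi_mul]
    rfl
  rw [h, Units.inv_eq_val_inv, coe_units_inv, charpoly_units_conj']

lemma exists_right_eigenvector_of_chi {m : ℕ} {P : Matrix (Fin m) (Fin m) Hq} {l : ℂ}
    {w : Fin m ⊕ Fin m → ℂ} (hw : w ≠ 0) (hPw : chi P *ᵥ w = l • w) :
    ∃ v ≠ 0, ∀ i, (P *ᵥ v) i = v i * toH l := by
  set v : Fin m → Hq := fun k => ofC (w (.inl k)) (-star (w (.inr k))) with hv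
  refine ⟨v, ?_, fun i => ext_toC ?_ ?_⟩
  · contrapose! hw
    have hk : ∀ k, w (.inl k) = 0 ∧ w (.inr k) = 0 := fun k => by simpa [hv] using congrFun hw k
    ext (k | k)
    exacts [(hk k).1, (hk k).2]
  · have h := congrFun hPw (.inl i)
    simp only [mulVec, dotProduct, chi, Fintype.sum_sum_type, fromBlocks_apply₁₁,
      fromBlocks_apply₁₂, map_apply, Pi.smul_apply, smul_eq_mul, ← Finset.sum_add_distrib] at h
    simp only [mulVec, dotProduct, toC1_sum, toC1_mul, hv, toC1_ofC, toC2_ofC, toC1_toH,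
      toC2_toH, starRingEnd_apply, star_neg, star_star, star_zero]
    convert h using 1
    · exact Finset.sum_congr rfl fun k _ => by ring
    · ring
  · have h := congrArg star (congrFun hPw (.inr i))
    simp only [mulVec, dotProduct, chi, Fintype.sum_sum_type, fromBlocks_apply₂₁,
      fromBlocks_apply₂₂, map_apply, Matrix.neg_apply, Pi.smul_apply, smul_eq_mul, star_sum,
      star_add, star_mul', star_neg, star_star, ← Finset.sum_add_distrib] at h
    simp only [mulVec, dotProduct, toC2_sum, toC2_mul, hv, toC1_ofC, toC2_ofC, toC1_toH,
      toC2_toH, starRingEnd_apply]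
    convert congrArg Neg.neg h using 1
    · rw [← Finset.sum_neg_distrib]
      exact Finset.sum_congr rfl fun k _ => by ring
    · ring

def chiQ (p : Hq) : Matrix (Fin 2) (Fin 2) ℂ :=
  !![toC1 p, toC2 p; -star (toC2 p), star (toC1 p)]

lemma reindex_chi_fin_two (T : Matrix (Fin 2) (Fin 2) Hq) :
    reindex (Equiv.swap (.inl 1) (.inr 0)) (Equiv.swap (.inl 1) (.inr 0)) (chi T) =
      fromBlocks (chiQ (T 0 0)) (chiQ (T 0 1)) (chiQ (T 1 0)) (chiQ (T 1 1)) := by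
  ext (a | a) (b | b) <;> fin_cases a <;> fin_cases b <;> simp [Equiv.swap_apply_def, chi, chiQ]

lemma charpoly_chi_of_apply_one_zero_eq_zero {T : Matrix (Fin 2) (Fin 2) Hq} (h : T 1 0 = 0) :
    (chi T).charpoly = (chiQ (T 0 0)).charpoly * (chiQ (T 1 1)).charpoly := by
  have hzero : chiQ 0 = 0 := by
    ext i j; fin_cases i <;> fin_cases j <;> simp [chiQ, toC1_zero, toC2_zero]
  rw [← charpoly_reindex (Equiv.swap (.inl 1) (.inr 0)), reindex_chi_fin_two, h, hzero,
    charpoly_fromBlocks_zero₂₁]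

lemma charpoly_chiQ (p : Hq) :
    (chiQ p).charpoly = X ^ 2 - C (2 * p.re : ℂ) * X + C ((Quaternion.normSq p : ℝ) : ℂ) := by
  rw [charpoly, det_fin_two]
  simp only [charmatrix_apply_eq, charmatrix_apply_ne _ _ _ Fin.zero_ne_one,
    charmatrix_apply_ne _ _ _ Fin.zero_ne_one.symm, chiQ]
  simp only [RCLike.star_def, of_apply, cons_val', cons_val_zero, cons_val_fin_one, cons_val_one,
    map_neg, neg_neg, neg_mul, sub_neg_eq_add, map_mul]
  rw [X_sub_C_mul_X_sub_C_conj, ← C_mul, Complex.mul_conj, normSq_eq_normSq_toC1_add_normSq_toC2,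
    re_toC1, Complex.ofReal_add, C_add, C_mul]
  ring

lemma charpoly_chiQ_toH (z : ℂ) :
    (chiQ (toH z)).charpoly = (X - C z) * (X - C (starRingEnd ℂ z)) := by
  rw [charpoly_chiQ, X_sub_C_mul_X_sub_C_conj, normSq_eq_normSq_toC1_add_normSq_toC2, toC1_toH,
    toC2_toH, map_zero, add_zero]
  rfl

lemma re_eq_and_normSq_eq_of_charpoly_chiQ {c : Hq} {l : ℂ}
    (h : (chiQ c).charpoly = (X - C l) * (X - C (starRingEnd ℂ l))) :
    c.re = l.re ∧ Quaternion.normSq c = Complex.normSq l := by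
  rw [charpoly_chiQ, X_sub_C_mul_X_sub_C_conj] at h
  exact ⟨by simpa using congrArg (coeff · 1) h, by simpa using congrArg (coeff · 0) h⟩

lemma exists_ne_zero_mul_eq_mul_toH {c : Hq} {l : ℂ} (hre : c.re = l.re)
    (hn : Quaternion.normSq c = Complex.normSq l) : ∃ q ≠ 0, c * q = q * toH l := by
  obtain ⟨z, w, rfl⟩ : ∃ z w, c = ofC z w := ⟨_, _, (ofC_toC c).symm⟩
  rw [← re_toC1, toC1_ofC] at hre
  rw [normSq_eq_normSq_toC1_add_normSq_toC2, toC1_ofC, toC2_ofC, Complex.normSq_apply,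
    Complex.normSq_apply, Complex.normSq_apply] at hn
  -- Write `c = r + u` with `u` imaginary and let `s = l.im`. Since `u² = -s²`, `q = s - u i`
  -- satisfies `u q = q (s i)`; it vanishes only when `c = l̄`, which `j` conjugates to `l`.
  by_cases hc : z = starRingEnd ℂ l ∧ w = 0
  · refine ⟨ofC 0 1, by simp, ext_toC ?_ ?_⟩ <;>
      simp [toC1_mul, toC2_mul, hc.1, hc.2]
  · refine ⟨ofC (l.im + z.im : ℝ) (Complex.I * w), fun h => hc ?_, ext_toC ?_ ?_⟩
    · simp only [ofC_eq_zero, mul_eq_zero, Complex.I_ne_zero, false_or,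
        Complex.ofReal_eq_zero] at h
      exact ⟨Complex.ext (by simpa using hre) (by simp; linarith), h.2⟩
    · simp only [toC1_mul, toC1_ofC, toC2_ofC, toC1_toH]
      apply Complex.ext <;> simp
      · linear_combination (l.im + z.im) * hre
      · linear_combination hn - (z.re + l.re) * hre
    · simp only [toC2_mul, toC1_ofC, toC2_ofC, toC2_toH]
      apply Complex.ext <;> simp
      · linear_combination -w.im * hre
      · linear_combination w.re * hre

lemma exists_toH_mul_add_eq_mul_toH {l1 l2 : ℂ} (p : Hq) (h : l2 ≠ l1)
    (h' : starRingEnd ℂ l2 ≠ l1) : ∃ x, toH l1 * x + p = x * toH l2 := by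
  -- For `x = α + β j` the equation splits into `l₁ α + p₁ = α l₂` and `l₁ β + p₂ = β l̄₂`.
  refine ⟨ofC (toC1 p / (l2 - l1)) (toC2 p / (starRingEnd ℂ l2 - l1)), ext_toC ?_ ?_⟩ <;>
    simp only [toC1_add, toC2_add, toC1_mul, toC2_mul, toC1_ofC, toC2_ofC, toC1_toH, toC2_toH,
      map_zero, mul_zero, zero_mul, sub_zero, add_zero, zero_add]
  · field_simp [sub_ne_zero.2 h]; ring
  · field_simp [sub_ne_zero.2 h']; ring

/-- A 2×2 quaternionic matrix whose substantial right eigenvalues are distinct is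
diagonalizable, being similar over ℍ to diag(λ₁, λ₂). -/
theorem diagonalizable_of_distinct_substantial (P : Matrix (Fin 2) (Fin 2) Hq)
    (l1 l2 : ℂ) (h1 : l1.im = 0 ∨ 0 < l1.im) (h2 : l2.im = 0 ∨ 0 < l2.im)
    (hne : l1 ≠ l2)
    (hchar : (chi P).charpoly =
      (X - C l1) * (X - C (starRingEnd ℂ l1)) * (X - C l2) * (X - C (starRingEnd ℂ l2))) :
    ∃ S T : Matrix (Fin 2) (Fin 2) Hq, S * T = 1 ∧ T * S = 1 ∧
      P = S * Matrix.diagonal ![toH l1, toH l2] * T := by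
  obtain ⟨w, hw, hPw⟩ := exists_mulVec_eq_smul_of_isRoot_charpoly (M := chi P) (t := l1)
    (by simp [hchar])
  obtain ⟨v, hv, hPv⟩ := exists_right_eigenvector_of_chi hw hPw
  obtain ⟨S, hS⟩ := exists_units_fin_two_col_zero_eq hv
  set T := S.inv * P * S.val with hT
  have hT0 := units_inv_mul_mul_apply_of_col_eq S P hS hPv
  have hT00 : T 0 0 = toH l1 := (hT0 0).trans (by simp)
  have hT10 : T 1 0 = 0 := (hT0 1).trans (by simp)
  have hT11 : (chiQ (T 1 1)).charpoly = (X - C l2) * (X - C (starRingEnd ℂ l2)) := by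
    have h := charpoly_chi_units_conj S P
    rw [charpoly_chi_of_apply_one_zero_eq_zero hT10, hT00, charpoly_chiQ_toH, hchar] at h
    exact mul_left_cancel₀ ((monic_X_sub_C _).mul (monic_X_sub_C _)).ne_zero
      (h.trans (mul_assoc _ _ _))
  obtain ⟨hre, hn⟩ := re_eq_and_normSq_eq_of_charpoly_chiQ hT11
  obtain ⟨q, hq, hcq⟩ := exists_ne_zero_mul_eq_mul_toH hre hn
  obtain ⟨x, hx⟩ := exists_toH_mul_add_eq_mul_toH (T 0 1 * q) hne.symm
    (conj_ne_of_ne_of_im_nonneg (h1.elim Eq.ge le_of_lt) (h2.elim Eq.ge le_of_lt) hne.symm)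
  obtain ⟨U, hU⟩ := exists_units_upper_triangular_eq_diag hq hcq hx
  refine ⟨(S * U).val, (S * U).inv, (S * U).val_inv, (S * U).inv_val, ?_⟩
  have hTU : T = U.val * diagonal ![toH l1, toH l2] * U.inv := by
    rw [diagonal_vec2, ← hU, ← hT00, ← hT10, ← eta_fin_two]
  calc P = S.val * T * S.inv := by simp [hT, mul_assoc]
    _ = _ := by rw [hTU]; simp [mul_assoc]
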